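/- arXiv:2409.07159 — 2 statements merged into one kernel-verified Lean document; each statement's English description precedes it below -/
import Mathlib

section
/- For a real parameter p with |p| < 1, the improper integral ∫₀^∞ x^p / (1 + x²) dx equals π / (2 cos(pπ/2)). -/
open MeasureTheory Real Set

/-! The substitution `x = t ^ (1/2)` followed by `t = u / (1 - u)` turns the integral into half of
Euler's Beta integral `B(s, 1 - s) = Γ(s) Γ(1 - s)` with `s = (p + 1) / 2`, and the reflection
formula evaluates this to `π / sin (π s) = π / cos (p π / 2)`. -/

theorem integral_Ioo_rpow_mul_one_sub_rpow_eq_Gamma {a b : ℝ} (ha : 0 < a) (hb : 0 < b) :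
    ∫ u in Ioo (0:ℝ) 1, u ^ (a - 1) * (1 - u) ^ (b - 1) = Gamma a * Gamma b / Gamma (a + b) := by
  apply Complex.ofReal_injective
  push_cast [← Complex.Gamma_ofReal]
  rw [← Complex.betaIntegral_eq_Gamma_mul_div a b (by simpa) (by simpa), Complex.betaIntegral,
    intervalIntegral.integral_of_le zero_le_one, integral_Ioc_eq_integral_Ioo,
    ← integral_complex_ofReal]
  refine setIntegral_congr_fun measurableSet_Ioo fun u ⟨hu0, hu1⟩ => ?_
  push_cast [Complex.ofReal_cpow hu0.le, Complex.ofReal_cpow (sub_nonneg.2 hu1.le)]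
  rfl

theorem image_div_one_add_Ioi : (fun t : ℝ => t / (1 + t)) '' Ioi 0 = Ioo 0 1 := by
  ext u
  constructor
  · rintro ⟨t, ht : 0 < t, rfl⟩
    exact ⟨by positivity, (div_lt_one (by positivity)).2 (by linarith)⟩
  · rintro ⟨hu0, hu1⟩
    refine ⟨u / (1 - u), div_pos hu0 (sub_pos.2 hu1), ?_⟩
    have : 1 - u ≠ 0 := (sub_pos.2 hu1).ne'
    field_simp
    ring

theorem integral_Ioo_zero_one_eq_integral_Ioi {E : Type*} [NormedAddCommGroup E]
    [NormedSpace ℝ E] (g : ℝ → E) :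
    ∫ u in Ioo (0:ℝ) 1, g u = ∫ t in Ioi (0:ℝ), ((1 + t) ^ 2)⁻¹ • g (t / (1 + t)) := by
  rw [← image_div_one_add_Ioi]
  refine integral_image_eq_integral_deriv_smul_of_monotoneOn measurableSet_Ioi
    (fun t (ht : 0 < t) => ?_) (fun s (hs : 0 < s) t _ hst => ?_) g
  · have h : HasDerivAt (fun t : ℝ => t / (1 + t)) ((1 * (1 + t) - t * 1) / (1 + t) ^ 2) t :=
      (hasDerivAt_id' t).div ((hasDerivAt_id' t).const_add 1) (by positivity)
    exact (h.congr_deriv (by ring)).hasDerivWithinAt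
  · have ht : (0:ℝ) < t := hs.trans_le hst
    rw [div_le_div_iff₀ (by positivity) (by positivity)]
    nlinarith

theorem integral_Ioi_rpow_div_one_add_rpow_eq_Gamma {a b : ℝ} (ha : 0 < a) (hb : 0 < b) :
    ∫ t in Ioi (0:ℝ), t ^ (a - 1) / (1 + t) ^ (a + b) = Gamma a * Gamma b / Gamma (a + b) := by
  rw [← integral_Ioo_rpow_mul_one_sub_rpow_eq_Gamma ha hb, integral_Ioo_zero_one_eq_integral_Ioi]
  refine setIntegral_congr_fun measurableSet_Ioi fun t (ht : 0 < t) => ?_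
  have h1t : 0 < 1 + t := by positivity
  have hsub : 1 - t / (1 + t) = (1 + t)⁻¹ := by field_simp; ring
  rw [smul_eq_mul, hsub, div_rpow ht.le h1t.le, inv_rpow h1t.le,
    show a + b = (a - 1) + (b - 1) + 2 by ring, rpow_add h1t, rpow_add h1t, rpow_two]
  field_simp

theorem integral_Ioi_rpow_div_one_add {s : ℝ} (hs0 : 0 < s) (hs1 : s < 1) :
    ∫ t in Ioi (0:ℝ), t ^ (s - 1) / (1 + t) = π / sin (π * s) := by
  have h := integral_Ioi_rpow_div_one_add_rpow_eq_Gamma hs0 (sub_pos.2 hs1)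
  simpa only [add_sub_cancel, rpow_one, Gamma_one, div_one, Gamma_mul_Gamma_one_sub] using h

theorem integral_Ioi_rpow_div_one_add_rpow {q s : ℝ} (hs : 0 < s) (hsq : s < q) :
    ∫ x in Ioi (0:ℝ), x ^ (s - 1) / (1 + x ^ q) = π / q / sin (π * (s / q)) := by
  have hq : 0 < q := hs.trans hsq
  rw [div_right_comm, ← integral_Ioi_rpow_div_one_add (div_pos hs hq) ((div_lt_one hq).2 hsq),
    ← integral_comp_rpow_Ioi_of_pos (g := fun t => t ^ (s / q - 1) / (1 + t)) hq, ← integral_div]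
  refine setIntegral_congr_fun measurableSet_Ioi fun x (hx : 0 < x) => ?_
  rw [smul_eq_mul, ← rpow_mul hx.le, show s - 1 = (q - 1) + q * (s / q - 1) by field_simp; ring,
    rpow_add hx]
  field_simp

theorem integral_rpow_div_one_add_sq (p : ℝ) (hp : |p| < 1) :
    ∫ x in Ioi (0:ℝ), x ^ p / (1 + x ^ 2) = π / (2 * Real.cos (p * π / 2)) := by
  obtain ⟨hp1, hp2⟩ := abs_lt.mp hp
  have h := integral_Ioi_rpow_div_one_add_rpow (q := 2) (s := p + 1) (by linarith) (by linarith)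
  simp only [add_sub_cancel_right, rpow_two] at h
  rw [h, div_div, show π * ((p + 1) / 2) = p * π / 2 + π / 2 by ring, sin_add_pi_div_two]
end

section
/- Let g and N denote the standard Gaussian probability density function and cumulative distribution function. For any real constant c, ∫₀^∞ N(-c·z) g(z) dz = 1/4 - (1/(2π)) arctan(c). -/
/-!
Reflecting and rescaling, `N (-c z) = z ∫_c^∞ g (z s) ds` for `z > 0`, and
`g (z s) g z = e^{-(1 + s²) z² / 2} / (2π)`. After swapping the two integrals, the inner one is
`∫_0^∞ z e^{-(1 + s²) z² / 2} dz = 1 / (1 + s²)`, leaving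
`(2π)⁻¹ ∫_c^∞ ds / (1 + s²) = (π / 2 - arctan c) / (2π)`.
-/

open MeasureTheory Real Set ProbabilityTheory

theorem integral_Ioi_mul_exp_neg_mul_sq {b : ℝ} (hb : 0 < b) :
    ∫ r in Ioi (0 : ℝ), r * exp (-b * r ^ 2) = (2 * b)⁻¹ := by
  exact_mod_cast integral_mul_cexp_neg_mul_sq (b := (b : ℂ)) (by simpa)

theorem integral_Ioi_mul_exp_neg_one_add_sq_mul_sq (s : ℝ) :
    ∫ z in Ioi (0 : ℝ), z * exp (-((1 + s ^ 2) / 2) * z ^ 2) = (1 + s ^ 2)⁻¹ := by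
  rw [integral_Ioi_mul_exp_neg_mul_sq (by positivity), mul_div_cancel₀ _ two_ne_zero]

theorem integrable_mul_exp_neg_one_add_sq_mul_sq :
    Integrable (Function.uncurry fun z s : ℝ => z * exp (-((1 + s ^ 2) / 2) * z ^ 2))
      ((volume.restrict (Ioi 0)).prod volume) := by
  refine (integrable_prod_iff' (by fun_prop)).2 ⟨.of_forall fun s => ?_, ?_⟩
  · exact (integrable_mul_exp_neg_mul_sq (b := (1 + s ^ 2) / 2) (by positivity)).restrict
  · refine integrable_inv_one_add_sq.congr (.of_forall fun s => ?_)
    dsimp only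
    rw [← integral_Ioi_mul_exp_neg_one_add_sq_mul_sq s]
    refine setIntegral_congr_fun measurableSet_Ioi fun z (hz : 0 < z) => ?_
    rw [Function.uncurry_apply_pair, norm_of_nonneg (by positivity)]

theorem integral_Ioi_integral_Ioi_mul_exp_neg_one_add_sq_mul_sq (c : ℝ) :
    ∫ z in Ioi (0 : ℝ), ∫ s in Ioi c, z * exp (-((1 + s ^ 2) / 2) * z ^ 2) =
      π / 2 - arctan c := by
  rw [integral_integral_swap (integrable_mul_exp_neg_one_add_sq_mul_sq.mono_measure
    (Measure.prod_mono le_rfl Measure.restrict_le_self))]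
  simp_rw [integral_Ioi_mul_exp_neg_one_add_sq_mul_sq, integral_Ioi_inv_one_add_sq]

theorem gaussianPDFReal_zero_one_neg (x : ℝ) :
    gaussianPDFReal 0 1 (-x) = gaussianPDFReal 0 1 x := by
  simp [gaussianPDFReal]

theorem gaussianPDFReal_zero_one_mul (x y : ℝ) :
    gaussianPDFReal 0 1 x * gaussianPDFReal 0 1 y =
      (2 * π)⁻¹ * exp (-(x ^ 2 + y ^ 2) / 2) := by
  simp only [gaussianPDFReal, NNReal.coe_one, mul_one, sub_zero]
  rw [mul_mul_mul_comm, ← mul_inv, mul_self_sqrt (by positivity), ← exp_add]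
  ring_nf

theorem setIntegral_Iic_neg_mul_gaussianPDFReal_mul {z : ℝ} (hz : 0 < z) (c : ℝ) :
    (∫ t in Iic (-c * z), gaussianPDFReal 0 1 t) * gaussianPDFReal 0 1 z =
      (2 * π)⁻¹ * ∫ s in Ioi c, z * exp (-((1 + s ^ 2) / 2) * z ^ 2) := by
  have hreflect : ∫ t in Iic (-c * z), gaussianPDFReal 0 1 t =
      ∫ t in Ioi (z * c), gaussianPDFReal 0 1 t := by
    simp_rw [neg_mul, ← integral_comp_neg_Ioi, gaussianPDFReal_zero_one_neg, mul_comm c]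
  rw [hreflect, ← integral_comp_mul_left_Ioi' _ _ hz, smul_eq_mul, mul_assoc,
    ← integral_mul_const, ← integral_const_mul, ← integral_const_mul]
  refine setIntegral_congr_fun measurableSet_Ioi fun s _ => ?_
  rw [gaussianPDFReal_zero_one_mul]
  ring_nf

theorem integral_gaussianCdf_mul_pdf (c : ℝ) (g N : ℝ → ℝ)
    (hg : ∀ z, g z = (Real.sqrt (2*π))⁻¹ * Real.exp (-z^2/2))
    (hN : ∀ x, N x = ∫ t in Iic x, g t) :
    ∫ z in Ioi (0:ℝ), N (-c*z) * g z = 1/4 - (1/(2*π)) * Real.arctan c := by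
  obtain rfl : g = gaussianPDFReal 0 1 := funext fun z => by simp [hg, gaussianPDFReal]
  calc ∫ z in Ioi (0:ℝ), N (-c*z) * gaussianPDFReal 0 1 z
      = ∫ z in Ioi (0:ℝ), (2 * π)⁻¹ * ∫ s in Ioi c, z * exp (-((1 + s ^ 2) / 2) * z ^ 2) :=
        setIntegral_congr_fun measurableSet_Ioi fun z hz => by
          rw [hN, setIntegral_Iic_neg_mul_gaussianPDFReal_mul hz]
    _ = (2 * π)⁻¹ * (π / 2 - arctan c) := by
        rw [integral_const_mul, integral_Ioi_integral_Ioi_mul_exp_neg_one_add_sq_mul_sq]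
    _ = 1/4 - (1/(2*π)) * Real.arctan c := by
        field_simp
        ring
end
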